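/- Let n ≥ 2, χ > 0, δ ∈ (0,1), M > 0 with M ≤ 2(1−δ)/((2 + 1/(1−δ))(n + 2δ)χ), and let p satisfy 1 < p ≤ n/2 + δ. Set β = sqrt(χ(p−1)/(4M)) and φ(s) = exp((βs)²). Then for all s ∈ [0, M]: (2p/((p−1)(1−δ)))·(φ'(s))²/φ(s) + (χ²(p−1)p/2)·φ(s) + χp·φ'(s) ≤ (1−δ)·φ''(s). -/

import Mathlib

/-!
With `t = 2β²s` one has `φ' = tφ` and `φ'' = (2β² + t²)φ`, so after dividing by `φ > 0` the claim
is a quadratic inequality in `t`. Since `t ≤ 2β²M = χ(p-1)/2`, the left side is at most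
`χ²p(p-1)/2 · (2 + 1/(1-δ))`, while the right side is at least `(1-δ)·2β² = (1-δ)χ(p-1)/(2M)`;
the smallness condition on `M` together with `2p ≤ n + 2δ` is exactly what compares the two.
-/

open Real

lemma hasDerivAt_exp_mul_sq (β s : ℝ) :
    HasDerivAt (fun s => exp ((β * s) ^ 2)) (2 * β ^ 2 * s * exp ((β * s) ^ 2)) s := by
  have h : HasDerivAt (fun s => (β * s) ^ 2) (2 * β ^ 2 * s) s := by
    refine (((hasDerivAt_id' s).const_mul β).fun_pow 2).congr_deriv ?_
    push_cast
    ring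
  convert h.exp using 1
  ring

lemma deriv_exp_mul_sq (β : ℝ) :
    deriv (fun s => exp ((β * s) ^ 2)) = fun s => 2 * β ^ 2 * s * exp ((β * s) ^ 2) :=
  funext fun s => (hasDerivAt_exp_mul_sq β s).deriv

lemma deriv_deriv_exp_mul_sq (β s : ℝ) :
    deriv (deriv fun s => exp ((β * s) ^ 2)) s
      = (2 * β ^ 2 + (2 * β ^ 2 * s) ^ 2) * exp ((β * s) ^ 2) := by
  rw [deriv_exp_mul_sq]
  exact (((hasDerivAt_id s).const_mul (2 * β ^ 2)).fun_mul (hasDerivAt_exp_mul_sq β s)).deriv.trans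
    (by simp only [id]; ring)

lemma mul_two_add_inv_le_of_le_div {χ p M u N : ℝ} (hχ : 0 < χ) (hp : 0 < p) (hu : 0 < u)
    (hM0 : 0 ≤ M) (hM : M ≤ 2 * u / ((2 + 1 / u) * N * χ)) (hpN : 2 * p ≤ N) :
    χ * p * M * (2 + 1 / u) ≤ u := by
  have hN : 0 < N := by linarith
  have hMc : M * ((2 + 1 / u) * N * χ) ≤ 2 * u := (le_div_iff₀ (by positivity)).1 hM
  have hp_le : M * (2 + 1 / u) * χ * (2 * p) ≤ M * (2 + 1 / u) * χ * N :=
    mul_le_mul_of_nonneg_left hpN (by positivity)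
  linarith

lemma quadratic_absorption {χ p M u t : ℝ} (hχ : 0 < χ) (hp : 1 < p) (hM : 0 < M) (hu : 0 < u)
    (hsmall : χ * p * M * (2 + 1 / u) ≤ u) (ht0 : 0 ≤ t) (ht : t ≤ χ * (p - 1) / 2) :
    2 * p / ((p - 1) * u) * t ^ 2 + χ ^ 2 * (p - 1) * p / 2 + χ * p * t
      ≤ u * (χ * (p - 1) / (2 * M) + t ^ 2) := by
  have hp0 : 0 < p - 1 := sub_pos.2 hp
  have hsq : t ^ 2 ≤ (χ * (p - 1) / 2) ^ 2 := pow_le_pow_left₀ ht0 ht 2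
  calc 2 * p / ((p - 1) * u) * t ^ 2 + χ ^ 2 * (p - 1) * p / 2 + χ * p * t
      ≤ 2 * p / ((p - 1) * u) * (χ * (p - 1) / 2) ^ 2 + χ ^ 2 * (p - 1) * p / 2
          + χ * p * (χ * (p - 1) / 2) := by gcongr
    _ = χ * (p - 1) / (2 * M) * (χ * p * M * (2 + 1 / u)) := by field_simp; ring
    _ ≤ χ * (p - 1) / (2 * M) * u := by gcongr
    _ ≤ u * (χ * (p - 1) / (2 * M) + t ^ 2) := by nlinarith [sq_nonneg t]

theorem pointwise_absorption_general (n : ℕ) (χ δ M p : ℝ)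
    (hχ : 0 < χ) (hδ1 : δ < 1) (hM0 : 0 < M)
    (hM : M ≤ 2 * (1 - δ) / ((2 + 1 / (1 - δ)) * ((n : ℝ) + 2 * δ) * χ))
    (hp1 : 1 < p) (hp2 : p ≤ (n : ℝ) / 2 + δ)
    (β : ℝ) (hβ : β = Real.sqrt (χ * (p - 1) / (4 * M)))
    (φ : ℝ → ℝ) (hφ : φ = fun s => Real.exp ((β * s) ^ 2)) :
    ∀ s : ℝ, s ∈ Set.Icc 0 M →
      2 * p / ((p - 1) * (1 - δ)) * (deriv φ s) ^ 2 / φ s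
        + χ ^ 2 * (p - 1) * p / 2 * φ s
        + χ * p * deriv φ s
      ≤ (1 - δ) * deriv (deriv φ) s := by
  rintro s ⟨hs0, hsM⟩
  have hu : 0 < 1 - δ := sub_pos.2 hδ1
  have hp0 : 0 < p - 1 := sub_pos.2 hp1
  have hβ2 : 2 * β ^ 2 = χ * (p - 1) / (2 * M) := by
    rw [hβ, sq_sqrt (by positivity)]
    ring
  have hsmall := mul_two_add_inv_le_of_le_div (p := p) hχ (by linarith) hu hM0.le hM (by linarith)
  have ht : 2 * β ^ 2 * s ≤ χ * (p - 1) / 2 := by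
    calc 2 * β ^ 2 * s ≤ χ * (p - 1) / (2 * M) * M := by rw [hβ2]; gcongr
      _ = χ * (p - 1) / 2 := by field_simp
  have core := quadratic_absorption hχ hp1 hM0 hu hsmall (by positivity) ht
  rw [← hβ2] at core
  subst hφ
  rw [deriv_deriv_exp_mul_sq, deriv_exp_mul_sq]
  set t := 2 * β ^ 2 * s
  set E := exp ((β * s) ^ 2)
  have hE : 0 < E := exp_pos _
  calc 2 * p / ((p - 1) * (1 - δ)) * (t * E) ^ 2 / E + χ ^ 2 * (p - 1) * p / 2 * E + χ * p * (t * E)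
      = E * (2 * p / ((p - 1) * (1 - δ)) * t ^ 2 + χ ^ 2 * (p - 1) * p / 2 + χ * p * t) := by
        field_simp
    _ ≤ E * ((1 - δ) * (2 * β ^ 2 + t ^ 2)) := by gcongr
    _ = (1 - δ) * ((2 * β ^ 2 + t ^ 2) * E) := by ring

theorem pointwise_absorption (n : ℕ) (hn : 2 ≤ n) (χ δ M p : ℝ)
    (hχ : 0 < χ) (hδ0 : 0 < δ) (hδ1 : δ < 1) (hM0 : 0 < M)
    (hM : M ≤ 2 * (1 - δ) / ((2 + 1 / (1 - δ)) * ((n : ℝ) + 2 * δ) * χ))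
    (hp1 : 1 < p) (hp2 : p ≤ (n : ℝ) / 2 + δ)
    (β : ℝ) (hβ : β = Real.sqrt (χ * (p - 1) / (4 * M)))
    (φ : ℝ → ℝ) (hφ : φ = fun s => Real.exp ((β * s) ^ 2)) :
    ∀ s : ℝ, s ∈ Set.Icc 0 M →
      2 * p / ((p - 1) * (1 - δ)) * (deriv φ s) ^ 2 / φ s
        + χ ^ 2 * (p - 1) * p / 2 * φ s
        + χ * p * deriv φ s
      ≤ (1 - δ) * deriv (deriv φ) s :=
  pointwise_absorption_general n χ δ M p hχ hδ1 hM0 hM hp1 hp2 β hβ φ hφ
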